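/- arXiv:2203.06709 — 3 statements merged into one kernel-verified Lean document; each statement's English description precedes it below -/
import Mathlib

section
/- Let q be a prime power and let n, t be integers with 1 < t < n. If there exists a t-Steiner system in the hyperbolic polar space D_n of rank n over F_q, then t = n − 1. -/
/-- The hyperbolic quadratic form `Q(x) = ∑_{i=1}^n x_i x_{n+i}` on `(F_q)^{2n}`. -/
def hypQ (F : Type*) [Field F] (n : ℕ) (x : Fin (2 * n) → F) : F :=
  ∑ i : Fin n, x ⟨i.1, by have := i.2; omega⟩ * x ⟨n + i.1, by have := i.2; omega⟩

/-- A subspace is totally isotropic for the hyperbolic quadratic form. -/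
def HypIsotropic (F : Type*) [Field F] (n : ℕ)
    (U : Submodule F (Fin (2 * n) → F)) : Prop :=
  ∀ u ∈ U, hypQ F n u = 0

/-- `Y` is a `t`-Steiner system in the hyperbolic polar space `D_n`: a set of
totally isotropic `n`-dimensional subspaces (generators) such that every totally
isotropic `t`-dimensional subspace lies in exactly one member of `Y`. -/
def HypSteiner (F : Type*) [Field F] (n t : ℕ)
    (Y : Set (Submodule F (Fin (2 * n) → F))) : Prop :=
  (∀ W ∈ Y, HypIsotropic F n W ∧ Module.finrank F ↥W = n) ∧
  ∀ T : Submodule F (Fin (2 * n) → F), HypIsotropic F n T →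
    Module.finrank F ↥T = t → ∃! W, W ∈ Y ∧ T ≤ W


/-!
Fix a member `W` of the Steiner system, a `(t - 2)`-space `S' ≤ W` and an isotropic vector
`s ∈ S'ᗮ` outside `W`, and put `S = S' + ⟨s⟩`. Counting the isotropic vectors of `Sᗮ` (by induction
on `dim S`, splitting off one hyperbolic pair at a time) shows that exactly `N = q^(n-t) + 1`
members of the system contain `S`. Each of them meets `W` in dimension at most `t - 1`, since it
contains `s ∉ W`, yet together they cover the `(n - 1)`-space `W ∩ sᗮ`. Hence
`q^(n-1) - q^(t-2) ≤ N (q^(t-1) - q^(t-2))`, which forces `n - t ≤ 1`.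
-/

open Module Finset QuadraticMap

namespace Submodule

variable {K M : Type*} [DivisionRing K] [AddCommGroup M] [Module K M]

lemma exists_le_finrank_eq [FiniteDimensional K M] (U : Submodule K M) {k : ℕ}
    (hk : k ≤ finrank K U) : ∃ W ≤ U, finrank K W = k := by
  induction k with
  | zero => exact ⟨⊥, bot_le, finrank_bot K M⟩
  | succ k ih =>
    obtain ⟨W, hWU, hWk⟩ := ih (by omega)
    obtain ⟨x, hxU, hxW⟩ := SetLike.exists_of_lt <|
      lt_of_le_of_ne hWU fun h => by rw [h] at hWk; omega
    exact ⟨W ⊔ K ∙ x, sup_le hWU ((span_singleton_le_iff_mem x U).mpr hxU),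
      by rw [finrank_sup_span_singleton hxW, hWk]⟩

lemma exists_eq_sup_span_singleton [FiniteDimensional K M] {U : Submodule K M} {k : ℕ}
    (hU : finrank K U = k + 1) :
    ∃ W ≤ U, finrank K W = k ∧ ∃ x ∈ U, x ∉ W ∧ U = W ⊔ K ∙ x := by
  obtain ⟨W, hWU, hWk⟩ := U.exists_le_finrank_eq (k := k) (by omega)
  obtain ⟨x, hxU, hxW⟩ := SetLike.exists_of_lt <|
    lt_of_le_of_ne hWU fun h => by rw [h] at hWk; omega
  refine ⟨W, hWU, hWk, x, hxU, hxW, (eq_of_le_of_finrank_le ?_ ?_).symm⟩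
  · exact sup_le hWU ((span_singleton_le_iff_mem x U).mpr hxU)
  · rw [finrank_sup_span_singleton hxW, hWk, hU]

lemma mem_of_mem_sup_span_singleton {U W : Submodule K M} {x s : M} (hUW : U ≤ W) (hs : s ∉ W)
    (hx : x ∈ U ⊔ K ∙ s) (hxW : x ∈ W) : x ∈ U := by
  obtain ⟨u, hu, y, hy, rfl⟩ := mem_sup.mp hx
  obtain ⟨c, rfl⟩ := mem_span_singleton.mp hy
  rcases eq_or_ne c 0 with rfl | hc
  · simpa using hu
  · rw [W.add_mem_iff_right (hUW hu), smul_mem_iff W hc] at hxW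
    exact absurd hxW hs

lemma card_filter_mem [Fintype K] [Fintype M] [DecidableEq M] (U : Submodule K M)
    [DecidablePred (· ∈ U)] : #{x | x ∈ U} = Fintype.card K ^ finrank K U := by
  rw [← Fintype.card_subtype, ← card_eq_pow_finrank (K := K) (V := U)]

end Submodule

namespace QuadraticForm

variable {F V : Type*} [Field F] [AddCommGroup V] [Module F V] (Q : QuadraticForm F V)

def IsTotallyIsotropic (U : Submodule F V) : Prop := ∀ u ∈ U, Q u = 0

-- Orthogonality is taken for `polar Q`, not the associated form, so that `2` need not be a unit.
def orthogonal (U : Submodule F V) : Submodule F V :=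
  LinearMap.BilinForm.orthogonal (polarBilin Q) U

variable {Q}

lemma mem_orthogonal {U : Submodule F V} {x : V} :
    x ∈ Q.orthogonal U ↔ ∀ u ∈ U, polar Q u x = 0 := Iff.rfl

lemma mem_orthogonal_span_singleton {s x : V} :
    x ∈ Q.orthogonal (F ∙ s) ↔ polar Q s x = 0 := by
  simp only [mem_orthogonal, Submodule.mem_span_singleton, forall_exists_index,
    forall_apply_eq_imp_iff, polar_smul_left, smul_eq_mul, mul_eq_zero]
  exact ⟨fun h => (h 1).resolve_left one_ne_zero, fun h a => Or.inr h⟩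

lemma orthogonal_sup (U W : Submodule F V) :
    Q.orthogonal (U ⊔ W) = Q.orthogonal U ⊓ Q.orthogonal W := by
  ext x
  simp only [Submodule.mem_inf, mem_orthogonal, Submodule.forall_mem_sup, polar_add_left]
  constructor
  · intro h
    exact ⟨fun u hu => by simpa using h u hu 0 (zero_mem _),
      fun w hw => by simpa using h 0 (zero_mem _) w hw⟩
  · rintro ⟨hU, hW⟩ u hu w hw
    rw [hU u hu, hW w hw, add_zero]

lemma polarBilin_isRefl : (polarBilin Q).IsRefl := fun x y h => by
  rwa [polarBilin_apply_apply, polar_comm, ← polarBilin_apply_apply]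

lemma polar_self_eq_zero {x : V} (hx : Q x = 0) : polar Q x x = 0 := by
  rw [polar_self, hx, smul_zero]

lemma map_add_smul (x y : V) (a : F) : Q (x + a • y) = Q x + a * a * Q y + a * polar Q x y := by
  rw [QuadraticMap.map_add Q, QuadraticMap.map_smul, polar_smul_right, smul_eq_mul, smul_eq_mul]

namespace IsTotallyIsotropic

variable {U W : Submodule F V}

lemma polar_eq_zero (hU : Q.IsTotallyIsotropic U) {u v : V} (hu : u ∈ U) (hv : v ∈ U) :
    polar Q u v = 0 := by
  rw [polar, hU _ (U.add_mem hu hv), hU u hu, hU v hv, sub_zero, sub_zero]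

lemma le_orthogonal (hU : Q.IsTotallyIsotropic U) : U ≤ Q.orthogonal U :=
  fun _ hx _ hu => hU.polar_eq_zero hu hx

lemma mono (hW : Q.IsTotallyIsotropic W) (h : U ≤ W) : Q.IsTotallyIsotropic U :=
  fun u hu => hW u (h hu)

lemma le_orthogonal_of_le (hW : Q.IsTotallyIsotropic W) (h : U ≤ W) : W ≤ Q.orthogonal U :=
  fun _ hx _ hu => hW.polar_eq_zero (h hu) hx

lemma sup_span_singleton (hU : Q.IsTotallyIsotropic U) {x : V} (hx : Q x = 0)
    (hxU : x ∈ Q.orthogonal U) : Q.IsTotallyIsotropic (U ⊔ F ∙ x) := by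
  intro v hv
  obtain ⟨u, hu, y, hy, rfl⟩ := Submodule.mem_sup.mp hv
  obtain ⟨a, rfl⟩ := Submodule.mem_span_singleton.mp hy
  rw [map_add_smul, hU u hu, hx, mem_orthogonal.mp hxU u hu]
  ring

end IsTotallyIsotropic

lemma map_add_smul_add_smul {s f u : V} (hs : Q s = 0) (hf : Q f = 0) (hsf : polar Q s f = 1)
    (hsu : polar Q s u = 0) (hfu : polar Q f u = 0) (a b : F) :
    Q (u + a • s + b • f) = Q u + a * b := by
  rw [map_add_smul, map_add_smul, polar_add_left, polar_smul_left, polar_comm Q u s,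
    polar_comm Q u f, hs, hf, hsu, hfu, hsf, smul_eq_mul]
  ring

lemma polar_add_smul_add_smul_left {s f u : V} (hs : Q s = 0) (hsf : polar Q s f = 1)
    (hsu : polar Q s u = 0) (a b : F) : polar Q s (u + a • s + b • f) = b := by
  simp only [polar_add_right, polar_smul_right, hsu, polar_self_eq_zero hs, hsf, smul_eq_mul]
  ring

lemma polar_add_smul_add_smul_right {s f u : V} (hf : Q f = 0) (hsf : polar Q s f = 1)
    (hfu : polar Q f u = 0) (a b : F) : polar Q f (u + a • s + b • f) = a := by
  simp only [polar_add_right, polar_smul_right, hfu, polar_self_eq_zero hf, polar_comm Q f s, hsf,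
    smul_eq_mul]
  ring

lemma polar_sub_smul_sub_smul_left {s f : V} (hs : Q s = 0) (hsf : polar Q s f = 1) (x : V) :
    polar Q s (x - polar Q f x • s - polar Q s x • f) = 0 := by
  simp only [polar_sub_right, polar_smul_right, polar_self_eq_zero hs, hsf, smul_eq_mul]
  ring

lemma polar_sub_smul_sub_smul_right {s f : V} (hf : Q f = 0) (hsf : polar Q s f = 1) (x : V) :
    polar Q f (x - polar Q f x • s - polar Q s x • f) = 0 := by
  simp only [polar_sub_right, polar_smul_right, polar_self_eq_zero hf, polar_comm Q f s, hsf,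
    smul_eq_mul]
  ring

section Nondegenerate

variable [FiniteDimensional F V] (hQ : (polarBilin Q).Nondegenerate)
include hQ

lemma finrank_orthogonal (U : Submodule F V) :
    finrank F (Q.orthogonal U) = finrank F V - finrank F U :=
  LinearMap.BilinForm.finrank_orthogonal hQ U

lemma orthogonal_orthogonal (U : Submodule F V) : Q.orthogonal (Q.orthogonal U) = U :=
  LinearMap.BilinForm.orthogonal_orthogonal hQ polarBilin_isRefl U

lemma exists_mem_orthogonal_polar_ne_zero {U : Submodule F V} {x : V} (hx : x ∉ U) :
    ∃ y ∈ Q.orthogonal U, polar Q x y ≠ 0 := by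
  by_contra! h
  refine hx ((orthogonal_orthogonal hQ U).le (mem_orthogonal.mpr fun y hy => ?_))
  rw [polar_comm]
  exact h y hy

lemma IsTotallyIsotropic.two_mul_finrank_le {U : Submodule F V} (hU : Q.IsTotallyIsotropic U) :
    2 * finrank F U ≤ finrank F V := by
  have := Submodule.finrank_mono hU.le_orthogonal
  have := Submodule.finrank_le U
  rw [finrank_orthogonal hQ] at *
  omega

lemma IsTotallyIsotropic.orthogonal_eq {U : Submodule F V} (hU : Q.IsTotallyIsotropic U)
    (hrank : 2 * finrank F U = finrank F V) : Q.orthogonal U = U :=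
  (Submodule.eq_of_le_of_finrank_le hU.le_orthogonal
    (by rw [finrank_orthogonal hQ]; omega)).symm

/-- Moving `x ∉ W` along a vector of `W = Wᗮ` not orthogonal to it makes it isotropic. -/
lemma exists_isotropic_mem_not_mem {W P : Submodule F V} (hW : Q.orthogonal W = W)
    (hWP : W ≤ P) (hPW : ¬ P ≤ W) (hWiso : Q.IsTotallyIsotropic W) :
    ∃ x ∈ P, Q x = 0 ∧ x ∉ W := by
  obtain ⟨y, hyP, hyW⟩ := SetLike.not_le_iff_exists.mp hPW
  obtain ⟨w, hwW, hyw⟩ := exists_mem_orthogonal_polar_ne_zero hQ hyW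
  rw [hW] at hwW
  refine ⟨y + (-Q y / polar Q y w) • w, P.add_mem hyP (P.smul_mem _ (hWP hwW)), ?_, ?_⟩
  · rw [map_add_smul, hWiso w hwW]
    field_simp
    ring
  · rwa [W.add_mem_iff_left (W.smul_mem _ hwW)]

lemma exists_isotropic_polar_eq_one {S : Submodule F V} {s : V} (hsS : s ∈ Q.orthogonal S)
    (hs : Q s = 0) (hs' : s ∉ S) :
    ∃ f ∈ Q.orthogonal S, Q f = 0 ∧ polar Q s f = 1 := by
  obtain ⟨y, hyS, hsy⟩ := exists_mem_orthogonal_polar_ne_zero hQ hs'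
  obtain ⟨v, hvS, hsv⟩ : ∃ v ∈ Q.orthogonal S, polar Q s v = 1 :=
    ⟨_, (Q.orthogonal S).smul_mem (polar Q s y)⁻¹ hyS,
      by rw [polar_smul_right, smul_eq_mul, inv_mul_cancel₀ hsy]⟩
  refine ⟨v + (-Q v) • s, (Q.orthogonal S).add_mem hvS ((Q.orthogonal S).smul_mem _ hsS), ?_, ?_⟩
  · rw [map_add_smul, hs, polar_comm, hsv]
    ring
  · rw [polar_add_right, polar_smul_right, ← hsv, polar_self_eq_zero hs, smul_zero, add_zero]

end Nondegenerate

section Counting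

open scoped Classical

variable [Fintype F] [Fintype V]

/-- For a hyperbolic pair `s, f` in `P`, an isotropic `x ∈ P` with `β = polar Q s x ≠ 0` is
`u + α • s + β • f` with `u ∈ P ∩ ⟨s, f⟩ᗮ` arbitrary and `α = - Q u / β` forced. -/
lemma card_isotropic_polar_ne_zero (P : Submodule F V) {s f : V} (hsP : s ∈ P) (hfP : f ∈ P)
    (hs : Q s = 0) (hf : Q f = 0) (hsf : polar Q s f = 1) :
    #{x | (x ∈ P ∧ Q x = 0) ∧ polar Q s x ≠ 0} = (Fintype.card F - 1) *
      Fintype.card F ^ finrank F ↥(P ⊓ Q.orthogonal (F ∙ s) ⊓ Q.orthogonal (F ∙ f)) := by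
  set U := P ⊓ Q.orthogonal (F ∙ s) ⊓ Q.orthogonal (F ∙ f)
  have mem_U {u : V} : u ∈ U ↔ u ∈ P ∧ polar Q s u = 0 ∧ polar Q f u = 0 := by
    simp only [U, Submodule.mem_inf, mem_orthogonal_span_singleton, and_assoc]
  have card_units : #{b : F | b ≠ 0} = Fintype.card F - 1 := by
    rw [filter_ne', card_erase_of_mem (mem_univ 0), card_univ]
  rw [← card_units, ← Submodule.card_filter_mem, mul_comm, ← card_product]
  have decompose (x : V) : x = (x - polar Q f x • s - polar Q s x • f) + polar Q f x • s
      + polar Q s x • f := by abel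
  have hsu := polar_sub_smul_sub_smul_left hs hsf
  have hfu := polar_sub_smul_sub_smul_right hf hsf
  refine card_nbij' (fun x => (x - polar Q f x • s - polar Q s x • f, polar Q s x))
    (fun p => p.1 + (-Q p.1 / p.2) • s + p.2 • f) ?_ ?_ ?_ ?_
  · intro x hx
    simp only [coe_filter, mem_univ, true_and, Set.mem_ofPred_eq, coe_product] at hx ⊢
    obtain ⟨⟨hxP, -⟩, hsx⟩ := hx
    refine ⟨mem_U.mpr ⟨?_, hsu x, hfu x⟩, hsx⟩
    exact P.sub_mem (P.sub_mem hxP (P.smul_mem _ hsP)) (P.smul_mem _ hfP)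
  · rintro ⟨u, b⟩ hp
    simp only [coe_filter, mem_univ, true_and, Set.mem_ofPred_eq, coe_product, Set.mem_prod] at hp ⊢
    obtain ⟨hu, hb⟩ := hp
    obtain ⟨huP, hsu, hfu⟩ := mem_U.mp hu
    refine ⟨⟨P.add_mem (P.add_mem huP (P.smul_mem _ hsP)) (P.smul_mem _ hfP), ?_⟩, ?_⟩
    · rw [map_add_smul_add_smul hs hf hsf hsu hfu]
      field_simp
      ring
    · rwa [polar_add_smul_add_smul_left hs hsf hsu]
  · intro x hx
    simp only [coe_filter, mem_univ, true_and, Set.mem_ofPred_eq] at hx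
    obtain ⟨⟨-, hx⟩, hsx⟩ := hx
    have hQx := map_add_smul_add_smul hs hf hsf (hsu x) (hfu x) (polar Q f x) (polar Q s x)
    rw [← decompose, hx] at hQx
    have hα : -Q (x - polar Q f x • s - polar Q s x • f) / polar Q s x = polar Q f x := by
      field_simp
      linear_combination hQx
    simp only
    rw [hα, ← decompose]
  · rintro ⟨u, b⟩ hp
    simp only [coe_filter, mem_univ, true_and, Set.mem_ofPred_eq, coe_product, Set.mem_prod] at hp
    obtain ⟨huP, hsu, hfu⟩ := mem_U.mp hp.1
    simp only [polar_add_smul_add_smul_left hs hsf hsu, polar_add_smul_add_smul_right hf hsf hfu]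
    rw [Prod.mk.injEq]
    exact ⟨by abel, rfl⟩

lemma card_isotropic_orthogonal_eq_add (hQ : (polarBilin Q).Nondegenerate)
    {S : Submodule F V} {x : V} (hxS : x ∈ Q.orthogonal S) (hx : Q x = 0) (hx' : x ∉ S) :
    #{y | y ∈ Q.orthogonal S ∧ Q y = 0} = #{y | y ∈ Q.orthogonal (S ⊔ F ∙ x) ∧ Q y = 0}
      + (Fintype.card F - 1) * Fintype.card F ^ (finrank F V - (finrank F S + 2)) := by
  obtain ⟨f, hfS, hf, hxf⟩ := exists_isotropic_polar_eq_one hQ hxS hx hx'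
  have hf' : f ∉ S ⊔ F ∙ x := fun hmem => by
    have hx_orth : x ∈ Q.orthogonal (S ⊔ F ∙ x) := by
      rw [orthogonal_sup]
      exact ⟨hxS, mem_orthogonal_span_singleton.mpr (polar_self_eq_zero hx)⟩
    have := mem_orthogonal.mp hx_orth f hmem
    rw [polar_comm, hxf] at this
    exact one_ne_zero this
  have hU : Q.orthogonal S ⊓ Q.orthogonal (F ∙ x) ⊓ Q.orthogonal (F ∙ f)
      = Q.orthogonal (S ⊔ F ∙ x ⊔ F ∙ f) := by
    rw [orthogonal_sup, orthogonal_sup]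
  rw [← card_filter_add_card_filter_not (fun y => polar Q x y = 0), filter_filter, filter_filter,
    card_isotropic_polar_ne_zero _ hxS hfS hx hf hxf, hU, finrank_orthogonal hQ,
    Submodule.finrank_sup_span_singleton hf', Submodule.finrank_sup_span_singleton hx']
  congr 2
  ext y
  simp only [mem_filter, mem_univ, true_and, orthogonal_sup, Submodule.mem_inf,
    mem_orthogonal_span_singleton]
  tauto

end Counting

end QuadraticForm

section Hyperbolic

variable (F : Type*) [Field F] (n : ℕ)

/-- `x ↦ ((x_1, …, x_n), (x_{n+1}, …, x_{2n}))`. -/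
def hypSplit : (Fin (2 * n) → F) ≃ₗ[F] (Fin n → F) × (Fin n → F) :=
  (LinearEquiv.funCongrLeft F F (finSumFinEquiv.trans (finCongr (two_mul n).symm))).trans
    (LinearEquiv.sumArrowLequivProdArrow _ _ F F)

def hypForm : QuadraticForm F (Fin (2 * n) → F) :=
  LinearMap.BilinMap.toQuadraticMap <| (dotProductBilin F F).compl₁₂
    (LinearMap.fst F (Fin n → F) (Fin n → F) ∘ₗ (hypSplit F n).toLinearMap)
    (LinearMap.snd F (Fin n → F) (Fin n → F) ∘ₗ (hypSplit F n).toLinearMap)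

variable {F n}

lemma hypForm_eq_dotProduct (x : Fin (2 * n) → F) :
    hypForm F n x = (hypSplit F n x).1 ⬝ᵥ (hypSplit F n x).2 := rfl

lemma hypIsotropic_iff {U : Submodule F (Fin (2 * n) → F)} :
    HypIsotropic F n U ↔ (hypForm F n).IsTotallyIsotropic U := Iff.rfl

lemma polar_hypForm (x y : Fin (2 * n) → F) : polar (hypForm F n) x y =
    (hypSplit F n x).1 ⬝ᵥ (hypSplit F n y).2 + (hypSplit F n y).1 ⬝ᵥ (hypSplit F n x).2 :=
  LinearMap.BilinMap.polar_toQuadraticMap x y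

lemma hypForm_nondegenerate : (polarBilin (hypForm F n)).Nondegenerate := by
  rw [QuadraticForm.polarBilin_isRefl.nondegenerate_iff_separatingLeft]
  intro x hx
  have h1 (c : Fin n → F) : c ⬝ᵥ (hypSplit F n x).2 = 0 := by
    simpa [polar_hypForm] using hx ((hypSplit F n).symm (c, 0))
  have h2 (d : Fin n → F) : (hypSplit F n x).1 ⬝ᵥ d = 0 := by
    simpa [polar_hypForm] using hx ((hypSplit F n).symm (0, d))
  apply (hypSplit F n).injective
  rw [map_zero, Prod.ext_iff]
  exact ⟨dotProduct_eq_zero _ h2,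
    dotProduct_eq_zero _ fun c => by rw [dotProduct_comm]; exact h1 c⟩

lemma exists_hypIsotropic_finrank_eq {t : ℕ} (ht : t ≤ n) :
    ∃ T : Submodule F (Fin (2 * n) → F), HypIsotropic F n T ∧ finrank F T = t := by
  set W := (LinearMap.range (LinearMap.inl F (Fin n → F) (Fin n → F))).map
    (hypSplit F n).symm.toLinearMap
  have hW : (hypForm F n).IsTotallyIsotropic W := by
    rintro _ ⟨_, ⟨a, rfl⟩, rfl⟩
    simp [hypForm_eq_dotProduct]
  have hrank : finrank F W = n := by
    rw [LinearEquiv.finrank_map_eq, LinearMap.finrank_range_of_inj LinearMap.inl_injective,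
      finrank_fin_fun]
  obtain ⟨T, hTW, hT⟩ := W.exists_le_finrank_eq (hrank ▸ ht)
  exact ⟨T, hypIsotropic_iff.mpr (hW.mono hTW), hT⟩

end Hyperbolic

section HyperbolicCounting

open scoped Classical

variable {F : Type*} [Field F] [Fintype F] {n : ℕ}

lemma card_dotProduct_eq_zero {a : Fin n → F} (ha : a ≠ 0) :
    #{b | a ⬝ᵥ b = 0} = Fintype.card F ^ (n - 1) := by
  have hker := Module.Dual.finrank_ker_add_one_of_ne_zero
    ((dotProductEquiv F (Fin n)).map_ne_zero_iff.mpr ha)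
  rw [finrank_fin_fun] at hker
  rw [← Nat.eq_sub_of_add_eq hker, ← Submodule.card_filter_mem]
  rfl

lemma card_isotropic_hypForm :
    #{x | hypForm F n x = 0} + Fintype.card F ^ (n - 1)
      = Fintype.card F ^ (2 * n - 1) + Fintype.card F ^ n := by
  have hsplit : #{x | hypForm F n x = 0} = #{p : (Fin n → F) × (Fin n → F) | p.1 ⬝ᵥ p.2 = 0} :=
    card_equiv (hypSplit F n).toEquiv fun x => by
      rw [mem_filter, mem_filter]; exact and_congr (iff_of_true (mem_univ _) (mem_univ _)) Iff.rfl
  have hsum : #{p : (Fin n → F) × (Fin n → F) | p.1 ⬝ᵥ p.2 = 0}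
      = ∑ a : Fin n → F, #{b | a ⬝ᵥ b = 0} := by
    simp only [card_filter, Fintype.sum_prod_type]
  have hzero : #{b : Fin n → F | (0 : Fin n → F) ⬝ᵥ b = 0} = Fintype.card F ^ n := by
    simp [filter_true_of_mem]
  rw [hsplit, hsum, ← add_sum_erase _ _ (mem_univ 0), hzero,
    sum_congr rfl fun a ha => card_dotProduct_eq_zero (ne_of_mem_erase ha), sum_const,
    card_erase_of_mem (mem_univ _), card_univ, Fintype.card_fun, Fintype.card_fin, smul_eq_mul,
    Nat.sub_one_mul, ← pow_add, show n + (n - 1) = 2 * n - 1 by omega]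
  have : Fintype.card F ^ (n - 1) ≤ Fintype.card F ^ (2 * n - 1) :=
    Nat.pow_le_pow_right Fintype.card_pos (by omega)
  omega

lemma card_isotropic_orthogonal_hypForm {S : Submodule F (Fin (2 * n) → F)}
    (hS : (hypForm F n).IsTotallyIsotropic S) :
    #{x | x ∈ (hypForm F n).orthogonal S ∧ hypForm F n x = 0} + Fintype.card F ^ (n - 1)
      = Fintype.card F ^ (2 * n - 1 - finrank F S) + Fintype.card F ^ n := by
  induction hk : finrank F S generalizing S with
  | zero =>
    rw [Submodule.finrank_eq_zero.mp hk, QuadraticForm.orthogonal,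
      LinearMap.BilinForm.orthogonal_bot, Nat.sub_zero]
    simpa only [Submodule.mem_top, true_and] using card_isotropic_hypForm
  | succ k ih =>
    obtain ⟨W, hWS, hWk, x, hxS, hxW, rfl⟩ := Submodule.exists_eq_sup_span_singleton hk
    have hrec := QuadraticForm.card_isotropic_orthogonal_eq_add hypForm_nondegenerate
      (QuadraticForm.mem_orthogonal.mpr fun w hw => hS.polar_eq_zero (hWS hw) hxS) (hS x hxS) hxW
    have hIH := ih (hS.mono hWS) hWk
    have hdim := hS.two_mul_finrank_le hypForm_nondegenerate
    rw [hk, finrank_fin_fun] at hdim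
    rw [finrank_fin_fun, hWk] at hrec
    rw [show 2 * n - 1 - k = (2 * n - (k + 2)) + 1 by omega, pow_succ] at hIH
    rw [show 2 * n - 1 - (k + 1) = 2 * n - (k + 2) by omega]
    have hmul : (Fintype.card F - 1) * Fintype.card F ^ (2 * n - (k + 2))
        + Fintype.card F ^ (2 * n - (k + 2))
        = Fintype.card F ^ (2 * n - (k + 2)) * Fintype.card F := by
      rw [← Nat.succ_mul, Nat.succ_eq_add_one, Nat.sub_add_cancel Fintype.card_pos, mul_comm]
    linarith

end HyperbolicCounting

namespace HypSteiner

open QuadraticForm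

variable {F : Type*} [Field F] {n t : ℕ} {Y : Set (Submodule F (Fin (2 * n) → F))}
  {M : Submodule F (Fin (2 * n) → F)}

lemma isTotallyIsotropic (hY : HypSteiner F n t Y) (hM : M ∈ Y) :
    (hypForm F n).IsTotallyIsotropic M :=
  hypIsotropic_iff.mp (hY.1 M hM).1

lemma orthogonal_eq (hY : HypSteiner F n t Y) (hM : M ∈ Y) : (hypForm F n).orthogonal M = M :=
  (hY.isTotallyIsotropic hM).orthogonal_eq hypForm_nondegenerate
    (by rw [(hY.1 M hM).2, finrank_fin_fun])

lemma nonempty (hY : HypSteiner F n t Y) (ht : t ≤ n) : Y.Nonempty := by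
  obtain ⟨T, hT, hTt⟩ := exists_hypIsotropic_finrank_eq (F := F) ht
  obtain ⟨W, ⟨hW, -⟩, -⟩ := hY.2 T hT hTt
  exact ⟨W, hW⟩

lemma eq_of_le_finrank_inf (hY : HypSteiner F n t Y) {M₁ M₂ : Submodule F (Fin (2 * n) → F)}
    (h₁ : M₁ ∈ Y) (h₂ : M₂ ∈ Y) (h : t ≤ finrank F ↥(M₁ ⊓ M₂)) : M₁ = M₂ := by
  obtain ⟨T, hT, hTt⟩ := (M₁ ⊓ M₂).exists_le_finrank_eq h
  obtain ⟨M, -, hM⟩ :=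
    hY.2 T (hypIsotropic_iff.mpr ((hY.isTotallyIsotropic h₁).mono (hT.trans inf_le_left))) hTt
  exact (hM M₁ ⟨h₁, hT.trans inf_le_left⟩).trans (hM M₂ ⟨h₂, hT.trans inf_le_right⟩).symm

lemma exists_mem_of_isotropic (hY : HypSteiner F n t Y) {S : Submodule F (Fin (2 * n) → F)}
    (hS : (hypForm F n).IsTotallyIsotropic S) (hSt : finrank F S + 1 = t) {x : Fin (2 * n) → F}
    (hxS : x ∈ (hypForm F n).orthogonal S) (hx : hypForm F n x = 0) (hx' : x ∉ S) :
    ∃ M ∈ Y, S ≤ M ∧ x ∈ M := by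
  obtain ⟨M, ⟨hM, hSM⟩, -⟩ := hY.2 (S ⊔ F ∙ x) (hypIsotropic_iff.mpr (hS.sup_span_singleton hx hxS))
    (by rw [Submodule.finrank_sup_span_singleton hx', hSt])
  exact ⟨M, hM, le_sup_left.trans hSM,
    hSM (Submodule.mem_sup_right (Submodule.mem_span_singleton_self x))⟩

lemma exists_isotropic_orthogonal_not_mem (hY : HypSteiner F n t Y)
    {W S' : Submodule F (Fin (2 * n) → F)} (hW : W ∈ Y) (hS'W : S' ≤ W) (hS' : finrank F S' < n) :
    ∃ s ∈ (hypForm F n).orthogonal S', hypForm F n s = 0 ∧ s ∉ W := by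
  refine exists_isotropic_mem_not_mem hypForm_nondegenerate (hY.orthogonal_eq hW)
    ((hY.isTotallyIsotropic hW).le_orthogonal_of_le hS'W) (fun hle => ?_) (hY.isTotallyIsotropic hW)
  have := Submodule.finrank_mono hle
  rw [finrank_orthogonal hypForm_nondegenerate, finrank_fin_fun, (hY.1 W hW).2] at this
  omega

lemma exists_mem_of_mem_orthogonal_span_singleton (hY : HypSteiner F n t Y)
    {W S' : Submodule F (Fin (2 * n) → F)} (hW : W ∈ Y) (hS'W : S' ≤ W)
    (hS't : finrank F S' + 2 = t) {s : Fin (2 * n) → F} (hsS' : s ∈ (hypForm F n).orthogonal S')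
    (hs : hypForm F n s = 0) (hsW : s ∉ W) {x : Fin (2 * n) → F} (hxW : x ∈ W)
    (hsx : x ∈ (hypForm F n).orthogonal (F ∙ s)) (hxS' : x ∉ S') :
    ∃ M ∈ Y, S' ⊔ F ∙ s ≤ M ∧ x ∈ M := by
  have hWiso := hY.isTotallyIsotropic hW
  refine hY.exists_mem_of_isotropic ((hWiso.mono hS'W).sup_span_singleton hs hsS') ?_ ?_
    (hWiso x hxW) fun h => hxS' (Submodule.mem_of_mem_sup_span_singleton hS'W hsW h hxW)
  · rw [Submodule.finrank_sup_span_singleton fun h => hsW (hS'W h)]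
    omega
  · rw [orthogonal_sup]
    exact ⟨hWiso.le_orthogonal_of_le hS'W hxW, hsx⟩

section Counting

open scoped Classical

variable [Fintype F]

/-- Every isotropic vector of `Sᗮ \ S` spans, together with `S`, a `t`-space, which lies in exactly
one member of `Y`; so the members through `S` partition the isotropic vectors of `Sᗮ \ S`. -/
lemma card_isotropic_orthogonal_eq (hY : HypSteiner F n t Y) {S : Submodule F (Fin (2 * n) → F)}
    (hS : (hypForm F n).IsTotallyIsotropic S) (hSt : finrank F S + 1 = t) :
    #{x | x ∈ (hypForm F n).orthogonal S ∧ hypForm F n x = 0} = Fintype.card F ^ finrank F S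
      + #{M | M ∈ Y ∧ S ≤ M} * (Fintype.card F ^ n - Fintype.card F ^ finrank F S) := by
  have hcover : ({x | x ∈ (hypForm F n).orthogonal S ∧ hypForm F n x = 0} : Finset _)
      = ({x | x ∈ S} : Finset (Fin (2 * n) → F)) ∪ ({M | M ∈ Y ∧ S ≤ M} : Finset _).biUnion
        (fun M => ({x | x ∈ M} : Finset _) \ ({x | x ∈ S} : Finset _)) := by
    ext x
    simp only [mem_union, mem_biUnion, mem_sdiff, mem_filter, mem_univ, true_and]
    constructor
    · rintro ⟨hxS, hx⟩
      by_cases hx' : x ∈ S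
      · exact Or.inl hx'
      · obtain ⟨M, hM, hSM, hxM⟩ := hY.exists_mem_of_isotropic hS hSt hxS hx hx'
        exact Or.inr ⟨M, ⟨hM, hSM⟩, hxM, hx'⟩
    · rintro (hx | ⟨M, ⟨hM, hSM⟩, hxM, -⟩)
      · exact ⟨hS.le_orthogonal hx, hS x hx⟩
      · exact ⟨(hY.isTotallyIsotropic hM).le_orthogonal_of_le hSM hxM,
          hY.isTotallyIsotropic hM x hxM⟩
  have hdisj : (({M | M ∈ Y ∧ S ≤ M} : Finset (Submodule F (Fin (2 * n) → F))) :
      Set (Submodule F (Fin (2 * n) → F))).PairwiseDisjoint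
      (fun M => ({x | x ∈ M} : Finset (Fin (2 * n) → F)) \ ({x | x ∈ S} : Finset _)) := by
    intro M₁ h₁ M₂ h₂ hne
    simp only [coe_filter, mem_univ, true_and] at h₁ h₂
    refine Finset.disjoint_left.mpr fun x hx₁ hx₂ => hne ?_
    simp only [mem_sdiff, mem_filter, mem_univ, true_and] at hx₁ hx₂
    refine hY.eq_of_le_finrank_inf h₁.1 h₂.1 ?_
    rw [← hSt, ← Submodule.finrank_sup_span_singleton hx₁.2]
    exact Submodule.finrank_mono (sup_le (le_inf h₁.2 h₂.2)
      ((Submodule.span_singleton_le_iff_mem _ _).mpr ⟨hx₁.1, hx₂.1⟩))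
  rw [hcover, card_union_of_disjoint ((disjoint_biUnion_right _ _ _).mpr fun _ _ => disjoint_sdiff),
    card_biUnion hdisj, Submodule.card_filter_mem]
  rw [sum_congr rfl fun M hM => ?_, sum_const, smul_eq_mul]
  simp only [mem_filter, mem_univ, true_and] at hM
  rw [card_sdiff_of_subset (monotone_filter_right _ fun x _ => @hM.2 x),
    Submodule.card_filter_mem, Submodule.card_filter_mem, (hY.1 M hM.1).2]

lemma card_filter_le_eq (hY : HypSteiner F n t Y) {S : Submodule F (Fin (2 * n) → F)}
    (hS : (hypForm F n).IsTotallyIsotropic S) (hSt : finrank F S + 1 = t) (htn : t ≤ n) :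
    #{M | M ∈ Y ∧ S ≤ M} = Fintype.card F ^ (n - t) + 1 := by
  have hZ := card_isotropic_orthogonal_hypForm hS
  rw [hY.card_isotropic_orthogonal_eq hS hSt] at hZ
  generalize #{M | M ∈ Y ∧ S ≤ M} = N at hZ ⊢
  generalize finrank F S = k at hZ hSt
  obtain ⟨m, hm⟩ : ∃ m, n = k + 1 + m := ⟨n - t, by omega⟩
  rw [hm, show 2 * (k + 1 + m) - 1 - k = k + 1 + m + m by omega,
    show k + 1 + m - 1 = k + m by omega] at hZ
  rw [show n - t = m by omega]
  simp only [pow_add, pow_one] at hZ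
  set a := Fintype.card F ^ k
  have ha : 0 < a := pow_pos Fintype.card_pos _
  have hq : 2 ≤ Fintype.card F := Fintype.one_lt_card
  have hp : 0 < Fintype.card F ^ m := pow_pos Fintype.card_pos _
  have hlt : a < a * Fintype.card F * Fintype.card F ^ m := by
    calc a < a * 2 := by omega
      _ ≤ a * Fintype.card F * Fintype.card F ^ m := by
        rw [mul_assoc]; exact Nat.mul_le_mul_left a (by nlinarith)
  zify [hlt.le] at hZ hlt
  have key : ((N : ℤ) - (Fintype.card F ^ m + 1)) * (a * Fintype.card F * Fintype.card F ^ m - a)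
      = 0 := by
    linear_combination hZ
  have hN := (mul_eq_zero.mp key).resolve_right (by linarith)
  exact_mod_cast sub_eq_zero.mp hN

/-- The members through `S' + ⟨s⟩` cover the `(n - 1)`-space `W ∩ sᗮ`, and each meets `W` in
dimension `< t`, since it contains `s ∉ W`. -/
lemma pow_sub_pow_le_card_mul (hY : HypSteiner F n t Y) {W S' : Submodule F (Fin (2 * n) → F)}
    (hW : W ∈ Y) (hS'W : S' ≤ W) (hS't : finrank F S' + 2 = t) {s : Fin (2 * n) → F}
    (hsS' : s ∈ (hypForm F n).orthogonal S') (hs : hypForm F n s = 0) (hsW : s ∉ W) :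
    Fintype.card F ^ (n - 1) - Fintype.card F ^ finrank F S' ≤ #{M | M ∈ Y ∧ S' ⊔ F ∙ s ≤ M} *
      (Fintype.card F ^ (finrank F S' + 1) - Fintype.card F ^ finrank F S') := by
  set K := W ⊓ (hypForm F n).orthogonal (F ∙ s)
  have hKrank : finrank F K = n - 1 := by
    have hK : K = (hypForm F n).orthogonal (W ⊔ F ∙ s) := by
      rw [orthogonal_sup, hY.orthogonal_eq hW]
    rw [hK, finrank_orthogonal hypForm_nondegenerate, finrank_fin_fun,
      Submodule.finrank_sup_span_singleton hsW, (hY.1 W hW).2]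
    omega
  have hS'K : S' ≤ K := le_inf hS'W fun y hy =>
    mem_orthogonal_span_singleton.mpr (by rw [polar_comm]; exact mem_orthogonal.mp hsS' y hy)
  have hcover : ({x | x ∈ K} : Finset _) \ ({x | x ∈ S'} : Finset _) ⊆
      ({M | M ∈ Y ∧ S' ⊔ F ∙ s ≤ M} : Finset (Submodule F (Fin (2 * n) → F))).biUnion
        (fun M => ({x | x ∈ M ⊓ W} : Finset _) \ ({x | x ∈ S'} : Finset _)) := by
    intro x hx
    simp only [mem_sdiff, mem_filter, mem_univ, true_and, K, Submodule.mem_inf] at hx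
    obtain ⟨⟨hxW, hsx⟩, hxS'⟩ := hx
    obtain ⟨M, hM, hSM, hxM⟩ :=
      hY.exists_mem_of_mem_orthogonal_span_singleton hW hS'W hS't hsS' hs hsW hxW hsx hxS'
    simp only [mem_biUnion, mem_sdiff, mem_filter, mem_univ, true_and, Submodule.mem_inf]
    exact ⟨M, ⟨hM, hSM⟩, ⟨hxM, hxW⟩, hxS'⟩
  calc Fintype.card F ^ (n - 1) - Fintype.card F ^ finrank F S'
      = #(({x | x ∈ K} : Finset _) \ ({x | x ∈ S'} : Finset _)) := by
        rw [card_sdiff_of_subset (monotone_filter_right _ fun x _ => @hS'K x),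
          Submodule.card_filter_mem, Submodule.card_filter_mem, hKrank]
    _ ≤ _ := card_le_card hcover
    _ ≤ _ := card_biUnion_le_card_mul _ _ _ fun M hM => by
        simp only [mem_filter, mem_univ, true_and] at hM
        have hMW : finrank F ↥(M ⊓ W) ≤ finrank F S' + 1 := by
          by_contra! h
          refine hsW (hY.eq_of_le_finrank_inf hM.1 hW (by omega) ▸ hM.2 ?_)
          exact Submodule.mem_sup_right (Submodule.mem_span_singleton_self s)
        rw [card_sdiff_of_subset (monotone_filter_right _ fun x _ hx =>
            Submodule.mem_inf.mpr ⟨hM.2 (Submodule.mem_sup_left hx), hS'W hx⟩),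
          Submodule.card_filter_mem, Submodule.card_filter_mem]
        exact Nat.sub_le_sub_right (Nat.pow_le_pow_right Fintype.card_pos hMW) _

end Counting

end HypSteiner

lemma le_one_of_pow_sub_pow_le {q k m : ℕ} (hq : 2 ≤ q)
    (h : q ^ (k + 1 + m) - q ^ k ≤ (q ^ m + 1) * (q ^ (k + 1) - q ^ k)) : m ≤ 1 := by
  have ha : 0 < q ^ k := pow_pos (by omega) _
  have h1 : q ^ k ≤ q ^ (k + 1) := Nat.pow_le_pow_right (by omega) (by omega)
  have h2 : q ^ k ≤ q ^ (k + 1 + m) := Nat.pow_le_pow_right (by omega) (by omega)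
  zify [h1, h2] at h
  simp only [pow_add, pow_one] at h
  have hpq : (q : ℤ) ^ m ≤ q := by nlinarith
  exact (Nat.pow_le_pow_iff_right hq).mp (by rw [pow_one]; exact_mod_cast hpq)

theorem steiner_hyperbolic_classification_general (n t : ℕ)
    (ht1 : 1 < t) (htn : t < n)
    (F : Type*) [Field F] [Fintype F]
    (h : ∃ Y : Set (Submodule F (Fin (2 * n) → F)), HypSteiner F n t Y) :
    t = n - 1 := by
  obtain ⟨Y, hY⟩ := h
  obtain ⟨W, hW⟩ := hY.nonempty htn.le
  obtain ⟨S', hS'W, hS'⟩ := W.exists_le_finrank_eq (k := t - 2) (by rw [(hY.1 W hW).2]; omega)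
  obtain ⟨s, hsS', hs, hsW⟩ := hY.exists_isotropic_orthogonal_not_mem hW hS'W (by omega)
  have hlow := hY.pow_sub_pow_le_card_mul hW hS'W (by omega) hsS' hs hsW
  rw [hY.card_filter_le_eq (((hY.isTotallyIsotropic hW).mono hS'W).sup_span_singleton hs hsS')
    (by rw [Submodule.finrank_sup_span_singleton fun h => hsW (hS'W h)]; omega) htn.le,
    hS', show n - 1 = t - 2 + 1 + (n - t) by omega] at hlow
  have := le_one_of_pow_sub_pow_le Fintype.one_lt_card hlow
  omega

theorem steiner_hyperbolic_classification (q n t : ℕ) (hq : IsPrimePow q)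
    (ht1 : 1 < t) (htn : t < n)
    (F : Type*) [Field F] [Fintype F] (hcard : Fintype.card F = q)
    (h : ∃ Y : Set (Submodule F (Fin (2 * n) → F)), HypSteiner F n t Y) :
    t = n - 1 :=
  steiner_hyperbolic_classification_general n t ht1 htn F h
end

section
/- Let q ≥ 2 be an integer and let n, d be integers with 1 ≤ d ≤ n. Then, as real numbers, α(n,d) < (14/5)·q^{n(n−d+1)} if d is odd, and α(n,d) < (14/5)·q^{n(n−d+2)} if d is even. -/
/-!
Put `r = q⁻¹ ≤ 1/2`. Pulling the leading powers of `q` out of every factor,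
`∏ (1 + q^(2i+1)) = q^(n²) ∏ (1 + r^(2i+1)) ≤ (3/2)(6/5) q^(n²)`, and the middle product of `α`
has absolute value `q^(-n(d-1)) ∏ (1 + (-r)^j) / ∏ (1 - (-r)^(n+j))`, where the numerator is at
most `1` (consecutive factors pair up) and the denominator at least `3/4`. Both the `6/5` and the
`3/4` come from the Weierstrass product inequality `1 - ∑ xᵢ ≤ ∏ (1 - xᵢ)`.
For even `d`, with `x = (-q)^(n-d+1)` and `y = q^(d-1)`, clearing denominators gives
`ε = N (x y² - 1) / ((q + 1)(x² y² - 1)(y - 1))` for an explicit polynomial `N`, and a polynomial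
inequality in `|x|, y ≥ 2` yields `|ε| ≤ |x| y = q^n`.
Hence `α ≤ (9/5)(4/3) q^(n(n-d+1))`, times `q^n` when `d` is even, and `12/5 < 14/5`.
-/

/-- The correction factor `ε(n,d)` for even `d`. -/
noncomputable def epsHerm (q n d : ℕ) : ℝ :=
  (((-(q : ℝ)) ^ (n - d + 2) - 1) +
      q * (((-(q : ℝ)) ^ (n + d - 2) - 1) / (q * (-(q : ℝ)) ^ (d - 2) - 1)) *
        ((-(q : ℝ)) ^ (n - d + 1) - 1)) /
  (((-(q : ℝ)) ^ (n - d + 2) - 1) +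
      q * (((-(q : ℝ)) ^ (n + d - 2) - 1) / ((-(q : ℝ)) ^ (n + d - 1) - 1)) *
        ((-(q : ℝ)) ^ (n - d + 1) - 1))

/-- The bound `α(n,d)`. -/
noncomputable def alphaBound (q n d : ℕ) : ℝ :=
  (∏ i ∈ Finset.range n, (1 + (q : ℝ) ^ (2 * i + 1))) *
    (∏ i ∈ Finset.range (d - 1),
      (1 + (-(q : ℝ)) ^ (i + 1)) / (1 - (-(q : ℝ)) ^ (n + i + 1))) *
    (if Even d then epsHerm q n d else 1)

open Finset

section Weierstrass

variable {ι R : Type*}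

theorem one_sub_sum_le_prod_one_sub [CommRing R] [LinearOrder R] [IsStrictOrderedRing R]
    (s : Finset ι) {x : ι → R} (h0 : ∀ i ∈ s, 0 ≤ x i) (h1 : ∀ i ∈ s, x i ≤ 1) :
    1 - ∑ i ∈ s, x i ≤ ∏ i ∈ s, (1 - x i) := by
  classical
  induction s using Finset.induction_on with
  | empty => simp
  | insert a s ha ih =>
    rw [sum_insert ha, prod_insert ha]
    have hs := ih (fun i hi ↦ h0 i (mem_insert_of_mem hi))
      (fun i hi ↦ h1 i (mem_insert_of_mem hi))
    have hs0 : 0 ≤ ∑ i ∈ s, x i := sum_nonneg fun i hi ↦ h0 i (mem_insert_of_mem hi)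
    have ha0 := h0 a (mem_insert_self a s)
    have ha1 := h1 a (mem_insert_self a s)
    nlinarith [mul_nonneg (sub_nonneg.2 ha1) (sub_nonneg.2 hs), mul_nonneg ha0 hs0]

theorem prod_one_add_le_inv_one_sub_sum [Field R] [LinearOrder R] [IsStrictOrderedRing R]
    (s : Finset ι) {x : ι → R} (h0 : ∀ i ∈ s, 0 ≤ x i) (hs : ∑ i ∈ s, x i < 1) :
    ∏ i ∈ s, (1 + x i) ≤ (1 - ∑ i ∈ s, x i)⁻¹ := by
  have h1 : ∀ i ∈ s, x i ≤ 1 := fun i hi ↦ (single_le_sum h0 hi).trans hs.le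
  have hpos : 0 < 1 - ∑ i ∈ s, x i := sub_pos.2 hs
  rw [← one_div, le_div_iff₀ hpos]
  calc (∏ i ∈ s, (1 + x i)) * (1 - ∑ i ∈ s, x i)
      ≤ (∏ i ∈ s, (1 + x i)) * ∏ i ∈ s, (1 - x i) :=
        mul_le_mul_of_nonneg_left (one_sub_sum_le_prod_one_sub s h0 h1)
          (prod_nonneg fun i hi ↦ by linarith [h0 i hi])
    _ = ∏ i ∈ s, (1 - x i ^ 2) := by rw [← prod_mul_distrib]; ring_nf
    _ ≤ 1 := prod_le_one (fun i hi ↦ by nlinarith [h0 i hi, h1 i hi])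
        (fun i hi ↦ by nlinarith [h0 i hi])

end Weierstrass

theorem geom_sum_le_inv_one_sub {K : Type*} [Field K] [LinearOrder K] [IsStrictOrderedRing K]
    {x : K} (hx : 0 ≤ x) (h'x : x < 1) (n : ℕ) : ∑ i ∈ range n, x ^ i ≤ (1 - x)⁻¹ := by
  rw [range_eq_Ico]
  simpa using geom_sum_Ico_le_of_lt_one (m := 0) (n := n) hx h'x

theorem sum_range_two_mul_add_one (n : ℕ) : ∑ i ∈ range n, (2 * i + 1) = n * n := by
  induction n with
  | zero => rfl
  | succ n ih => rw [sum_range_succ, ih]; ring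

theorem prod_one_add_pow_two_mul_add_one_le {r : ℝ} (hr0 : 0 ≤ r) (hr : r ≤ 1 / 2) (n : ℕ) :
    ∏ i ∈ range n, (1 + r ^ (2 * i + 1)) ≤ 9 / 5 := by
  cases n with
  | zero => norm_num
  | succ n =>
    have hsum : ∑ i ∈ range n, r ^ (2 * (i + 1) + 1) ≤ 1 / 6 :=
      calc ∑ i ∈ range n, r ^ (2 * (i + 1) + 1) = r ^ 3 * ∑ i ∈ range n, (r ^ 2) ^ i := by
            rw [mul_sum]; exact sum_congr rfl fun i _ ↦ by ring
        _ ≤ r ^ 3 * (1 - r ^ 2)⁻¹ := by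
            gcongr
            exact geom_sum_le_inv_one_sub (by positivity) (by nlinarith) n
        _ ≤ 1 / 6 := by
            rw [mul_inv_le_iff₀ (by nlinarith)]; nlinarith
    have htail : ∏ i ∈ range n, (1 + r ^ (2 * (i + 1) + 1)) ≤ 6 / 5 :=
      calc _ ≤ (1 - ∑ i ∈ range n, r ^ (2 * (i + 1) + 1))⁻¹ :=
            prod_one_add_le_inv_one_sub_sum _ (fun i _ ↦ by positivity) (by linarith)
        _ ≤ (1 - 1 / 6)⁻¹ := by gcongr
        _ = 6 / 5 := by norm_num
    rw [prod_range_succ']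
    calc _ ≤ 6 / 5 * (1 + r ^ (2 * 0 + 1)) := by gcongr
      _ ≤ 9 / 5 := by linarith [show r ^ (2 * 0 + 1) = r by ring]

theorem prod_one_add_pow_two_mul_add_one_le_of_two_le {q : ℝ} (hq : 2 ≤ q) (n : ℕ) :
    ∏ i ∈ range n, (1 + q ^ (2 * i + 1)) ≤ 9 / 5 * q ^ (n * n) := by
  have hq0 : q ≠ 0 := by positivity
  have hfactor : ∀ k : ℕ, 1 + q ^ k = q ^ k * (1 + q⁻¹ ^ k) := fun k ↦ by
    rw [mul_add, ← mul_pow, mul_inv_cancel₀ hq0]; ring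
  rw [prod_congr rfl fun i _ ↦ hfactor _, prod_mul_distrib, prod_pow_eq_pow_sum,
    sum_range_two_mul_add_one, mul_comm (9 / 5)]
  gcongr
  exact prod_one_add_pow_two_mul_add_one_le (by positivity)
    (inv_le_of_inv_le₀ (by norm_num) (by norm_num; linarith)) n

theorem abs_add_neg_pow {q c : ℝ} (hq : 1 ≤ q) (hc : |c| ≤ 1) (k : ℕ) :
    |c + (-q) ^ k| = q ^ k * (1 + c * (-q⁻¹) ^ k) := by
  have hq0 : 0 < q := by linarith
  have hinv : (-q) ^ k * (-q⁻¹) ^ k = 1 := by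
    rw [← mul_pow, neg_mul_neg, mul_inv_cancel₀ hq0.ne', one_pow]
  have hsmall : |c * (-q⁻¹) ^ k| ≤ 1 := by
    rw [abs_mul, abs_pow, abs_neg, abs_inv, abs_of_pos hq0]
    exact mul_le_one₀ hc (by positivity)
      (pow_le_one₀ (by positivity) (inv_le_one_of_one_le₀ hq))
  calc |c + (-q) ^ k| = |(-q) ^ k * (1 + c * (-q⁻¹) ^ k)| := by
        congr 1; linear_combination (-c) * hinv
    _ = q ^ k * (1 + c * (-q⁻¹) ^ k) := by
        rw [abs_mul, abs_pow, abs_neg, abs_of_pos hq0,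
          abs_of_nonneg (by linarith [neg_abs_le (c * (-q⁻¹) ^ k)])]

section NegPow

variable {r : ℝ}

theorem one_add_neg_pow_nonneg (hr0 : 0 ≤ r) (hr1 : r ≤ 1) (k : ℕ) : 0 ≤ 1 + (-r) ^ k := by
  have : |(-r) ^ k| ≤ 1 := by
    rw [abs_pow, abs_neg, abs_of_nonneg hr0]; exact pow_le_one₀ hr0 hr1
  linarith [neg_abs_le ((-r) ^ k)]

theorem prod_one_add_neg_pow_succ_le_one (hr0 : 0 ≤ r) (hr1 : r ≤ 1) (m : ℕ) :
    ∏ i ∈ range m, (1 + (-r) ^ (i + 1)) ≤ 1 := by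
  have hodd : ∀ j, 1 + (-r) ^ (2 * j + 1) ≤ 1 := fun j ↦ by
    rw [Odd.neg_pow ⟨j, rfl⟩]; linarith [pow_nonneg hr0 (2 * j + 1)]
  -- consecutive factors pair up as `(1 - r ^ (2j+1)) * (1 + r ^ (2j+2)) ≤ 1`
  have heven : ∀ j, ∏ i ∈ range (2 * j), (1 + (-r) ^ (i + 1)) ≤ 1 := by
    intro j
    induction j with
    | zero => simp
    | succ j ih =>
      rw [show 2 * (j + 1) = 2 * j + 1 + 1 by ring, prod_range_succ, prod_range_succ, mul_assoc]
      refine mul_le_one₀ ih (mul_nonneg (one_add_neg_pow_nonneg hr0 hr1 _)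
        (one_add_neg_pow_nonneg hr0 hr1 _)) ?_
      rw [Odd.neg_pow ⟨j, rfl⟩, Even.neg_pow ⟨j + 1, by ring⟩]
      have : r ^ (2 * j + 1 + 1) ≤ r ^ (2 * j + 1) := pow_le_pow_of_le_one hr0 hr1 (by omega)
      nlinarith [pow_nonneg hr0 (2 * j + 1), pow_nonneg hr0 (2 * j + 1 + 1)]
  obtain ⟨j, rfl | rfl⟩ := Nat.even_or_odd' m
  · exact heven j
  · rw [prod_range_succ]
    exact mul_le_one₀ (heven j) (one_add_neg_pow_nonneg hr0 hr1 _) (hodd j)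

theorem three_quarters_le_prod_one_sub_neg_pow (hr0 : 0 ≤ r) (hr : r ≤ 1 / 2) {m n : ℕ}
    (hmn : m < n) : 3 / 4 ≤ ∏ i ∈ range m, (1 - (-r) ^ (n + i + 1)) := by
  rcases m.eq_zero_or_pos with rfl | hm
  · norm_num
  have hpow_le_one : ∀ k, r ^ k ≤ 1 := fun k ↦ pow_le_one₀ hr0 (by linarith)
  have hsum : ∑ i ∈ range m, r ^ (n + i + 1) ≤ 1 / 4 :=
    calc ∑ i ∈ range m, r ^ (n + i + 1) = r ^ (n + 1) * ∑ i ∈ range m, r ^ i := by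
          rw [mul_sum]; exact sum_congr rfl fun i _ ↦ by ring
      _ ≤ (1 / 2) ^ 3 * 2 := by
          gcongr
          · exact (pow_le_pow_of_le_one hr0 (by linarith) (by omega : 3 ≤ n + 1)).trans
              (pow_le_pow_left₀ hr0 hr 3)
          · exact (geom_sum_le_inv_one_sub hr0 (by linarith) m).trans
              (inv_le_of_inv_le₀ (by norm_num) (by linarith))
      _ = 1 / 4 := by norm_num
  calc 3 / 4 ≤ 1 - ∑ i ∈ range m, r ^ (n + i + 1) := by linarith
    _ ≤ ∏ i ∈ range m, (1 - r ^ (n + i + 1)) :=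
        one_sub_sum_le_prod_one_sub _ (fun i _ ↦ by positivity) (fun i _ ↦ hpow_le_one _)
    _ ≤ ∏ i ∈ range m, (1 - (-r) ^ (n + i + 1)) := by
        refine prod_le_prod (fun i _ ↦ sub_nonneg.2 (hpow_le_one _)) fun i _ ↦ ?_
        have : (-r) ^ (n + i + 1) ≤ r ^ (n + i + 1) := by
          simpa [abs_pow, abs_of_nonneg hr0] using le_abs_self ((-r) ^ (n + i + 1))
        linarith

end NegPow

theorem abs_prod_one_add_neg_pow_div_le {q : ℝ} (hq : 2 ≤ q) {m n : ℕ} (hmn : m < n) :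
    |∏ i ∈ range m, (1 + (-q) ^ (i + 1)) / (1 - (-q) ^ (n + i + 1))| ≤
      4 / 3 * ((q ^ n)⁻¹) ^ m := by
  have hq0 : q ≠ 0 := by positivity
  have hr0 : 0 ≤ q⁻¹ := by positivity
  have hr : q⁻¹ ≤ 1 / 2 := inv_le_of_inv_le₀ (by norm_num) (by norm_num; linarith)
  have hfactor : ∀ i, |(1 + (-q) ^ (i + 1)) / (1 - (-q) ^ (n + i + 1))| =
      (q ^ n)⁻¹ * ((1 + (-q⁻¹) ^ (i + 1)) / (1 - (-q⁻¹) ^ (n + i + 1))) := fun i ↦ by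
    rw [abs_div, ← abs_neg (1 - _), neg_sub, sub_eq_neg_add,
      abs_add_neg_pow (by linarith) (by norm_num), abs_add_neg_pow (by linarith) (by norm_num)]
    field_simp
    ring
  have hden : 0 < ∏ i ∈ range m, (1 - (-q⁻¹) ^ (n + i + 1)) :=
    lt_of_lt_of_le (by norm_num) (three_quarters_le_prod_one_sub_neg_pow hr0 hr hmn)
  rw [abs_prod, prod_congr rfl fun i _ ↦ hfactor i, prod_mul_distrib, prod_const, card_range,
    prod_div_distrib, mul_comm (4 / 3 : ℝ)]
  refine mul_le_mul_of_nonneg_left ?_ (by positivity)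
  rw [div_le_iff₀ hden]
  linarith [prod_one_add_neg_pow_succ_le_one hr0 (by linarith) m,
    three_quarters_le_prod_one_sub_neg_pow hr0 hr hmn]

theorem abs_epsHerm_expr_le {q x y u v w : ℝ} (hq : 2 ≤ q) (hx : q ≤ |x|) (hy : q ≤ y)
    (hu : u = -(q * x)) (hv : q * v = -(x * y ^ 2)) (hw : w = x * y ^ 2) :
    |((u - 1) + q * ((v - 1) / (y - 1)) * (x - 1)) /
        ((u - 1) + q * ((v - 1) / (w - 1)) * (x - 1))| ≤ |x| * y := by
  set X := |x|
  have hX2 : 2 ≤ X := hq.trans hx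
  have hy2 : 2 ≤ y := hq.trans hy
  have hy1 : 0 < y - 1 := by linarith
  have hXy : 4 ≤ X * y := by nlinarith
  have hx2 : x ^ 2 = X ^ 2 := (sq_abs x).symm
  have hw1 : 0 < |w - 1| := by
    rw [abs_pos, hw]; intro h
    have : |x * y ^ 2| = 1 := by rw [show x * y ^ 2 = 1 by linarith, abs_one]
    rw [abs_mul, abs_of_nonneg (by positivity : 0 ≤ y ^ 2)] at this; nlinarith
  set N := x ^ 2 * y ^ 2 - x * y * (y - q) + (y - q) - 1
  have hnum : (u - 1) + q * ((v - 1) / (y - 1)) * (x - 1) = -N / (y - 1) := by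
    rw [eq_div_iff hy1.ne']
    field_simp
    linear_combination (y - 1) * hu + (x - 1) * hv
  have hden : (u - 1) + q * ((v - 1) / (w - 1)) * (x - 1) =
      -((q + 1) * (X ^ 2 * y ^ 2 - 1)) / (w - 1) := by
    have hw0 : w - 1 ≠ 0 := abs_pos.1 hw1
    rw [eq_div_iff hw0]
    field_simp
    linear_combination (w - 1) * hu + (x - 1) * hv - (q + 1) * y ^ 2 * hx2 - (q * x + 1) * hw
  have hNabs : |N| ≤ X ^ 2 * y ^ 2 + (y - 2) * (X * y + 1) := by
    have hxy : |x * y * (y - q)| = X * y * (y - q) := by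
      rw [abs_mul, abs_mul, abs_of_nonneg (by linarith : 0 ≤ y),
        abs_of_nonneg (by linarith : 0 ≤ y - q)]
    rw [abs_le]
    constructor <;> nlinarith [abs_le.1 hxy.le]
  have hwabs : |w - 1| ≤ X * y ^ 2 + 1 := by
    rw [hw]; refine (abs_sub _ _).trans ?_
    rw [abs_mul, abs_of_nonneg (by positivity : 0 ≤ y ^ 2), abs_one]
  have hpoly : (X ^ 2 * y ^ 2 + (y - 2) * (X * y + 1)) * (X * y ^ 2 + 1) ≤
      3 * X * y * (X ^ 2 * y ^ 2 - 1) * (y - 1) := by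
    obtain ⟨a, ha, hXa⟩ : ∃ a, 0 ≤ a ∧ X = 2 + a := ⟨X - 2, by linarith, by ring⟩
    obtain ⟨b, hb, hyb⟩ : ∃ b, 0 ≤ b ∧ y = 2 + b := ⟨y - 2, by linarith, by ring⟩
    rw [hXa, hyb, ← sub_nonneg]; ring_nf; positivity
  have hD : 0 < (q + 1) * (X ^ 2 * y ^ 2 - 1) := by
    have : 0 < X ^ 2 * y ^ 2 - 1 := by nlinarith
    positivity
  have hratio : (-N / (y - 1)) / (-((q + 1) * (X ^ 2 * y ^ 2 - 1)) / (w - 1)) =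
      N * (w - 1) / ((y - 1) * ((q + 1) * (X ^ 2 * y ^ 2 - 1))) := by
    rw [div_div_div_eq, neg_mul, mul_neg, neg_div_neg_eq]
  rw [hnum, hden, hratio, abs_div, abs_mul, abs_of_pos (mul_pos hy1 hD),
    div_le_iff₀ (mul_pos hy1 hD)]
  calc |N| * |w - 1| ≤ (X ^ 2 * y ^ 2 + (y - 2) * (X * y + 1)) * (X * y ^ 2 + 1) :=
        mul_le_mul hNabs hwabs (abs_nonneg _) (by nlinarith)
    _ ≤ 3 * X * y * (X ^ 2 * y ^ 2 - 1) * (y - 1) := hpoly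
    _ ≤ X * y * ((y - 1) * ((q + 1) * (X ^ 2 * y ^ 2 - 1))) := by
        have : 0 ≤ X * y * ((X ^ 2 * y ^ 2 - 1) * (y - 1)) := by
          have : 0 < X ^ 2 * y ^ 2 - 1 := by nlinarith
          positivity
        nlinarith

theorem abs_epsHerm_le {q n d : ℕ} (hq : 2 ≤ q) (hd : Even d) (hd0 : 0 < d) (hdn : d ≤ n) :
    |epsHerm q n d| ≤ (q : ℝ) ^ n := by
  obtain ⟨c, rfl⟩ : ∃ c, d = 2 * c + 2 := by
    obtain ⟨j, rfl⟩ := hd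
    exact ⟨j - 1, by omega⟩
  obtain ⟨k, rfl⟩ : ∃ k, n = 2 * c + 2 + k := ⟨n - (2 * c + 2), by omega⟩
  unfold epsHerm
  rw [show 2 * c + 2 + k - (2 * c + 2) + 2 = k + 2 by omega,
    show 2 * c + 2 + k + (2 * c + 2) - 2 = 4 * c + k + 2 by omega,
    show 2 * c + 2 - 2 = 2 * c by omega,
    show 2 * c + 2 + k + (2 * c + 2) - 1 = 4 * c + k + 3 by omega,
    show 2 * c + 2 + k - (2 * c + 2) + 1 = k + 1 by omega]
  have hQ : (2 : ℝ) ≤ q := by exact_mod_cast hq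
  set Q : ℝ := (q : ℝ)
  have hQ1 : 1 ≤ Q := by linarith
  have heven : (-Q) ^ (2 * c) = Q ^ (2 * c) := Even.neg_pow ⟨c, two_mul c⟩ Q
  have hx : Q ≤ |(-Q) ^ (k + 1)| := by
    rw [abs_pow, abs_neg, abs_of_nonneg (by linarith)]
    exact le_self_pow₀ hQ1 (by omega)
  have hy : Q ≤ Q * (-Q) ^ (2 * c) := by
    rw [heven]; exact le_mul_of_one_le_right (by linarith) (one_le_pow₀ hQ1)
  calc _ ≤ |(-Q) ^ (k + 1)| * (Q * (-Q) ^ (2 * c)) :=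
        abs_epsHerm_expr_le hQ hx hy (by ring) (by ring) (by ring)
    _ = Q ^ (2 * c + 2 + k) := by
        rw [abs_pow, abs_neg, abs_of_nonneg (by linarith), heven]; ring

theorem alphaBound_le {q n d : ℕ} (hq : 2 ≤ q) (hd1 : 1 ≤ d) (hdn : d ≤ n) :
    alphaBound q n d ≤
      12 / 5 * (q : ℝ) ^ (n * n) * (((q : ℝ) ^ n)⁻¹) ^ (d - 1) *
        (if Even d then (q : ℝ) ^ n else 1) := by
  have hQ : (2 : ℝ) ≤ q := by exact_mod_cast hq
  have hE : |if Even d then epsHerm q n d else 1| ≤ if Even d then (q : ℝ) ^ n else 1 := by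
    split_ifs with heven
    · exact abs_epsHerm_le hq heven hd1 hdn
    · simp
  calc alphaBound q n d ≤ |alphaBound q n d| := le_abs_self _
    _ = (∏ i ∈ range n, (1 + (q : ℝ) ^ (2 * i + 1))) *
          |∏ i ∈ range (d - 1), (1 + (-(q : ℝ)) ^ (i + 1)) / (1 - (-(q : ℝ)) ^ (n + i + 1))| *
          |if Even d then epsHerm q n d else 1| := by
        rw [alphaBound, abs_mul, abs_mul, abs_of_pos (prod_pos fun i _ ↦ by positivity)]
    _ ≤ 9 / 5 * (q : ℝ) ^ (n * n) * (4 / 3 * (((q : ℝ) ^ n)⁻¹) ^ (d - 1)) *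
          (if Even d then (q : ℝ) ^ n else 1) := by
        gcongr
        · exact prod_one_add_pow_two_mul_add_one_le_of_two_le hQ n
        · exact abs_prod_one_add_neg_pow_div_le hQ (by omega)
    _ = _ := by ring

theorem alpha_bound_estimate (q n d : ℕ) (hq : 2 ≤ q) (hd1 : 1 ≤ d) (hdn : d ≤ n) :
    (Odd d → alphaBound q n d < (14 / 5 : ℝ) * (q : ℝ) ^ (n * (n - d + 1))) ∧
    (Even d → alphaBound q n d < (14 / 5 : ℝ) * (q : ℝ) ^ (n * (n - d + 2))) := by
  have hq0 : (0 : ℝ) < q := by exact_mod_cast (by omega : 0 < q)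
  have hodd_exp :
      (q : ℝ) ^ (n * n) * (((q : ℝ) ^ n)⁻¹) ^ (d - 1) = (q : ℝ) ^ (n * (n - d + 1)) := by
    rw [show n * n = n * (n - d + 1) + n * (d - 1) by rw [← Nat.mul_add]; congr 1; omega,
      pow_add, pow_mul, pow_mul, inv_pow, mul_assoc, mul_inv_cancel₀ (by positivity), mul_one]
  have heven_exp :
      (q : ℝ) ^ (n * (n - d + 1)) * (q : ℝ) ^ n = (q : ℝ) ^ (n * (n - d + 2)) := by
    rw [← pow_add, ← Nat.mul_add_one, show n - d + 2 = n - d + 1 + 1 by omega]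
  have hbound := alphaBound_le hq hd1 hdn
  rw [mul_assoc (12 / 5 : ℝ), hodd_exp] at hbound
  refine ⟨fun hodd ↦ ?_, fun heven ↦ ?_⟩
  · rw [if_neg (Nat.not_even_iff_odd.2 hodd), mul_one] at hbound
    linarith [pow_pos hq0 (n * (n - d + 1))]
  · rw [if_pos heven, mul_assoc, heven_exp] at hbound
    linarith [pow_pos hq0 (n * (n - d + 2))]
end

section
/- Let q ≥ 2 be an integer and let n, d be integers with 1 ≤ d ≤ n. Then, as real numbers, β(n,d) < (5/2)·q^{(n−1)(n−2d+2)/2} if n is even, and β(n,d) < (5/2)·q^{n(n−2d+1)/2} if n is odd. -/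
open Finset Real

private lemma aux215 (k : ℕ) :
    ∏ i ∈ range (k+2), (1 + (1/2:ℝ) ^ (i+1)) ≤ 5/2 * (1 - (1/2:ℝ) ^ (k+2)) := by
  induction k with
  | zero =>
    rw [prod_range_succ, prod_range_one]
    norm_num
  | succ k ih =>
    rw [show k+1+2 = (k+2)+1 by ring, prod_range_succ]
    have hx : (0:ℝ) < (1/2:ℝ) ^ (k+2) := by positivity
    have hp : (0:ℝ) ≤ 1 + (1/2:ℝ) ^ (k+2+1) := by positivity
    calc (∏ i ∈ range (k+2), (1 + (1/2:ℝ)^(i+1))) * (1 + (1/2:ℝ)^(k+2+1))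
        ≤ 5/2 * (1 - (1/2:ℝ)^(k+2)) * (1 + (1/2:ℝ)^(k+2+1)) := by
          apply mul_le_mul_of_nonneg_right ih hp
      _ ≤ 5/2 * (1 - (1/2:ℝ)^(k+2+1)) := by
          have h2 : (1/2:ℝ)^(k+2) = 2 * (1/2:ℝ)^(k+2+1) := by ring
          nlinarith [sq_nonneg ((1/2:ℝ)^(k+2+1)), hx]

private lemma prod215 (k : ℕ) : ∏ i ∈ range k, (1 + (1/2:ℝ) ^ (i+1)) < 5/2 := by
  match k with
  | 0 => norm_num
  | 1 => rw [prod_range_one]; norm_num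
  | (k+2) =>
    have := aux215 k
    have hx : (0:ℝ) < (1/2:ℝ) ^ (k+2) := by positivity
    linarith

private lemma prodP (q k : ℕ) (hq : 2 ≤ q) :
    ∏ i ∈ range k, (1 + (q:ℝ) ^ (i+1)) <
      5/2 * (q:ℝ) ^ (∑ i ∈ range k, (i+1)) := by
  have hQ : (2:ℝ) ≤ (q:ℝ) := by exact_mod_cast hq
  have hQ0 : (0:ℝ) < (q:ℝ) := by linarith
  have step : ∏ i ∈ range k, (1 + (q:ℝ) ^ (i+1)) ≤
      ∏ i ∈ range k, ((1 + (1/2:ℝ)^(i+1)) * (q:ℝ)^(i+1)) := by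
    apply prod_le_prod (fun i _ => by positivity) (fun i _ => ?_)
    have h1 : (1/2:ℝ)^(i+1) * (q:ℝ)^(i+1) = ((q:ℝ)/2)^(i+1) := by
      rw [← mul_pow]; congr 1; ring
    have h2 : (1:ℝ) ≤ ((q:ℝ)/2)^(i+1) := one_le_pow₀ (by linarith)
    nlinarith
  rw [prod_mul_distrib, prod_pow_eq_pow_sum] at step
  have hpos : (0:ℝ) < (q:ℝ) ^ (∑ i ∈ range k, (i+1)) := by positivity
  calc ∏ i ∈ range k, (1 + (q:ℝ) ^ (i+1))
      ≤ (∏ i ∈ range k, (1 + (1/2:ℝ)^(i+1))) * (q:ℝ)^(∑ i ∈ range k, (i+1)) := step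
    _ < 5/2 * (q:ℝ)^(∑ i ∈ range k, (i+1)) :=
        mul_lt_mul_of_pos_right (prod215 k) hpos

private lemma main_lt (q k D c : ℕ) (hq : 2 ≤ q) (hc : 1 ≤ c) :
    (∏ i ∈ range k, (1 + (q:ℝ) ^ (i+1))) *
      ∏ i ∈ range D, (1 - (q:ℝ) ^ (2*i+1)) / (1 - (q:ℝ) ^ (c+2*i))
    < 5/2 * (q:ℝ) ^ (∑ i ∈ range k, (i+1)) *
        ((q:ℝ) ^ (∑ i ∈ range D, (2*i+1)) / (q:ℝ) ^ (∑ i ∈ range D, (c+2*i))) := by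
  have hQ : (2:ℝ) ≤ (q:ℝ) := by exact_mod_cast hq
  have hQ1 : (1:ℝ) < (q:ℝ) := by linarith
  have hQ0 : (0:ℝ) < (q:ℝ) := by linarith
  have hterm : ∀ i : ℕ,
      (0 ≤ (1 - (q:ℝ) ^ (2*i+1)) / (1 - (q:ℝ) ^ (c+2*i))) ∧
      (1 - (q:ℝ) ^ (2*i+1)) / (1 - (q:ℝ) ^ (c+2*i)) ≤ (q:ℝ)^(2*i+1) / (q:ℝ)^(c+2*i) := by
    intro i
    have ha : (1:ℝ) < (q:ℝ) ^ (2*i+1) := one_lt_pow₀ hQ1 (by omega)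
    have hb : (1:ℝ) < (q:ℝ) ^ (c+2*i) := one_lt_pow₀ hQ1 (by omega)
    have hrw : (1 - (q:ℝ) ^ (2*i+1)) / (1 - (q:ℝ) ^ (c+2*i)) =
        ((q:ℝ)^(2*i+1) - 1) / ((q:ℝ)^(c+2*i) - 1) := by
      rw [← neg_div_neg_eq]; ring_nf
    rw [hrw]
    constructor
    · exact div_nonneg (by linarith) (by linarith)
    · rw [div_le_div_iff₀ (by linarith) (by positivity)]
      have hle : (q:ℝ)^(2*i+1) ≤ (q:ℝ)^(c+2*i) :=
        pow_le_pow_right₀ (le_of_lt hQ1) (by omega)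
      nlinarith
  have hR : ∏ i ∈ range D, (1 - (q:ℝ) ^ (2*i+1)) / (1 - (q:ℝ) ^ (c+2*i)) ≤
      ∏ i ∈ range D, ((q:ℝ)^(2*i+1) / (q:ℝ)^(c+2*i)) :=
    prod_le_prod (fun i _ => (hterm i).1) (fun i _ => (hterm i).2)
  have hRval : ∏ i ∈ range D, ((q:ℝ)^(2*i+1) / (q:ℝ)^(c+2*i)) =
      (q:ℝ) ^ (∑ i ∈ range D, (2*i+1)) / (q:ℝ) ^ (∑ i ∈ range D, (c+2*i)) := by
    rw [prod_div_distrib, prod_pow_eq_pow_sum, prod_pow_eq_pow_sum]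
  have hPpos : (0:ℝ) ≤ ∏ i ∈ range k, (1 + (q:ℝ) ^ (i+1)) :=
    prod_nonneg (fun i _ => by positivity)
  have hdivpos : (0:ℝ) < (q:ℝ) ^ (∑ i ∈ range D, (2*i+1)) / (q:ℝ) ^ (∑ i ∈ range D, (c+2*i)) := by
    positivity
  calc (∏ i ∈ range k, (1 + (q:ℝ) ^ (i+1))) *
        ∏ i ∈ range D, (1 - (q:ℝ) ^ (2*i+1)) / (1 - (q:ℝ) ^ (c+2*i))
      ≤ (∏ i ∈ range k, (1 + (q:ℝ) ^ (i+1))) *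
        ((q:ℝ) ^ (∑ i ∈ range D, (2*i+1)) / (q:ℝ) ^ (∑ i ∈ range D, (c+2*i))) := by
        apply mul_le_mul_of_nonneg_left _ hPpos
        rw [← hRval]; exact hR
    _ < 5/2 * (q:ℝ) ^ (∑ i ∈ range k, (i+1)) *
        ((q:ℝ) ^ (∑ i ∈ range D, (2*i+1)) / (q:ℝ) ^ (∑ i ∈ range D, (c+2*i))) :=
        mul_lt_mul_of_pos_right (prodP q k hq) hdivpos

private lemma sum1 (k : ℕ) : 2 * ∑ i ∈ range k, (i+1) = k * (k+1) := by
  induction k with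
  | zero => simp
  | succ k ih => rw [sum_range_succ, Nat.mul_add, ih]; ring

private lemma sum2 (D : ℕ) : ∑ i ∈ range D, (2*i+1) = D*D := by
  induction D with
  | zero => simp
  | succ D ih => rw [sum_range_succ, ih]; ring

private lemma sum3 (c D : ℕ) : ∑ i ∈ range D, (c + 2*i) + D = D*c + D*D := by
  induction D with
  | zero => simp
  | succ D ih =>
    rw [sum_range_succ]
    have h : ∑ i ∈ range D, (c+2*i) + (c + 2*D) + (D+1) =
        (∑ i ∈ range D, (c+2*i) + D) + (c + 2*D + 1) := by ring
    rw [h, ih]; ring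

/-- The bound `β(m,d)`. -/
noncomputable def betaBound (q m d : ℕ) : ℝ :=
  if Even m then
    (∏ i ∈ Finset.range (m - 1), (1 + (q : ℝ) ^ (i + 1))) *
      ∏ i ∈ Finset.range (d - 1), (1 - (q : ℝ) ^ (2 * i + 1)) / (1 - (q : ℝ) ^ (m + 2 * i))
  else
    (∏ i ∈ Finset.range (m - 1), (1 + (q : ℝ) ^ (i + 1))) *
      ∏ i ∈ Finset.range (d - 1), (1 - (q : ℝ) ^ (2 * i + 1)) / (1 - (q : ℝ) ^ (m + 2 * i + 1))

theorem beta_bound_estimate (q n d : ℕ) (hq : 2 ≤ q) (hd1 : 1 ≤ d) (hdn : d ≤ n) :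
    (Even n →
      betaBound q n d <
        (5 / 2 : ℝ) * (q : ℝ) ^ ((((n : ℝ) - 1) * ((n : ℝ) - 2 * d + 2)) / 2)) ∧
    (Odd n →
      betaBound q n d <
        (5 / 2 : ℝ) * (q : ℝ) ^ (((n : ℝ) * ((n : ℝ) - 2 * d + 1)) / 2)) := by
  have hn1 : 1 ≤ n := le_trans hd1 hdn
  have hQ : (2:ℝ) ≤ (q:ℝ) := by exact_mod_cast hq
  have hQ0 : (0:ℝ) < (q:ℝ) := by linarith
  have cn : ((n - 1 : ℕ) : ℝ) = (n:ℝ) - 1 := by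
    rw [Nat.cast_sub hn1]; norm_num
  have cd : ((d - 1 : ℕ) : ℝ) = (d:ℝ) - 1 := by
    rw [Nat.cast_sub hd1]; norm_num
  have e1 : ((∑ i ∈ range (n-1), (i+1) : ℕ) : ℝ) = ((n:ℝ) - 1) * (n:ℝ) / 2 := by
    have h : (2 * ∑ i ∈ range (n-1), (i+1) : ℕ) = ((n-1) * ((n-1)+1) : ℕ) := sum1 (n-1)
    have h2 : 2 * ((∑ i ∈ range (n-1), (i+1) : ℕ) : ℝ) =
        ((n-1:ℕ):ℝ) * (((n-1:ℕ):ℝ) + 1) := by exact_mod_cast h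
    rw [cn] at h2
    have hn' : (n:ℝ) - 1 + 1 = (n:ℝ) := by ring
    rw [hn'] at h2
    linarith
  have e2 : ((∑ i ∈ range (d-1), (2*i+1) : ℕ) : ℝ) = ((d:ℝ) - 1) * ((d:ℝ) - 1) := by
    have h2 : ((∑ i ∈ range (d-1), (2*i+1) : ℕ) : ℝ) = ((d-1:ℕ):ℝ) * ((d-1:ℕ):ℝ) := by
      exact_mod_cast sum2 (d-1)
    rw [cd] at h2; exact h2
  have e3 : ∀ c : ℕ, ((∑ i ∈ range (d-1), (c + 2*i) : ℕ) : ℝ) =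
      ((d:ℝ) - 1) * (c:ℝ) + ((d:ℝ) - 1) * ((d:ℝ) - 1) - ((d:ℝ) - 1) := by
    intro c
    have h2 : ((∑ i ∈ range (d-1), (c + 2*i) : ℕ) : ℝ) + ((d-1:ℕ):ℝ) =
        ((d-1:ℕ):ℝ) * (c:ℝ) + ((d-1:ℕ):ℝ) * ((d-1:ℕ):ℝ) := by exact_mod_cast sum3 c (d-1)
    rw [cd] at h2; linarith
  have key : ∀ (c : ℕ), 1 ≤ c →
      5/2 * (q:ℝ) ^ (∑ i ∈ range (n-1), (i+1)) *
        ((q:ℝ) ^ (∑ i ∈ range (d-1), (2*i+1)) / (q:ℝ) ^ (∑ i ∈ range (d-1), (c+2*i))) =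
      5/2 * (q:ℝ) ^ ((((∑ i ∈ range (n-1), (i+1) : ℕ) : ℝ)
          + ((∑ i ∈ range (d-1), (2*i+1) : ℕ) : ℝ)
          - ((∑ i ∈ range (d-1), (c+2*i) : ℕ) : ℝ))) := by
    intro c _
    rw [mul_assoc]
    congr 1
    rw [← Real.rpow_natCast (q:ℝ) (∑ i ∈ range (n-1), (i+1)),
        ← Real.rpow_natCast (q:ℝ) (∑ i ∈ range (d-1), (2*i+1)),
        ← Real.rpow_natCast (q:ℝ) (∑ i ∈ range (d-1), (c+2*i)),
        ← Real.rpow_sub hQ0, ← Real.rpow_add hQ0]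
    congr 1
    ring
  constructor
  · intro heven
    rw [betaBound, if_pos heven]
    have h := main_lt q (n-1) (d-1) n hq hn1
    refine h.trans_le (le_of_eq ?_)
    rw [key n hn1]
    congr 1
    rw [e1, e2, e3 n]
    ring
  · intro hodd
    rw [betaBound, if_neg (Nat.not_even_iff_odd.mpr hodd)]
    have hrw : ∀ i : ℕ, (n + 2*i + 1) = ((n+1) + 2*i) := fun i => by omega
    simp only [hrw]
    have h := main_lt q (n-1) (d-1) (n+1) hq (by omega)
    refine h.trans_le (le_of_eq ?_)
    rw [key (n+1) (by omega)]
    congr 1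
    rw [e1, e2, e3 (n+1)]
    push_cast
    ring
end
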